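/- Let μ be a finite nonnegative Borel measure on ℝ whose support is contained in a compact set, with μ([−r,r]) > 0 for every r > 0. Then for every δ ≥ 0, the sign uncertainty constant 𝔼(μ;δ) := inf{ r(F) : F ≠ 0 real entire of exponential type ≤ δ, F ∈ L¹(ℝ,μ), ∫F dμ ≤ 0, F eventually nonnegative on ℝ } equals 0. -/

import Mathlib

open MeasureTheory

/-- `F` has exponential type at most `δ`. -/
def ExpTypeLE (F : ℂ → ℂ) (δ : ℝ) : Prop :=
  ∀ ε > (0 : ℝ), ∃ C : ℝ, ∀ z : ℂ,
    ‖F z‖ ≤ C * Real.exp ((δ + ε) * ‖z‖)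

/-- The radius `r(f) = inf { r > 0 : f(x) ≥ 0 for |x| ≥ r }` of the last sign change. -/
noncomputable def lastSignChange (f : ℝ → ℝ) : ℝ :=
  sInf {r : ℝ | 0 < r ∧ ∀ x : ℝ, r ≤ |x| → 0 ≤ f x}

/-! Polynomials have exponential type `0`, so it suffices to find, for each `ε > 0`, a real
polynomial `p ≠ 0` with `p ≥ 0` on `|x| ≥ ε` and `∫ p dμ ≤ 0`. If `μ` lives on `[-R, R]`, take
`p(x) = (x² - ε²) (R² + ε² - x²)^(2n)`, with an even exponent so that `p ≥ 0` on all of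
`|x| ≥ ε`. On `[-R, R]` it is at most `R² (R²)^(2n)`, while on
`[-ε/2, ε/2]`, which has positive mass, it is at most `-(3ε²/4) (R² + 3ε²/4)^(2n)`, and the
second geometric rate wins for large `n`. -/

open Polynomial Filter

namespace ExpTypeLE

variable {F G : ℂ → ℂ} {δ δ' : ℝ}

lemma exists_nonneg_bound (hF : ExpTypeLE F δ) :
    ∀ ε > (0 : ℝ), ∃ C ≥ (0 : ℝ), ∀ z : ℂ, ‖F z‖ ≤ C * Real.exp ((δ + ε) * ‖z‖) := by
  intro ε hε
  obtain ⟨C, hC⟩ := hF ε hε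
  refine ⟨C, ?_, hC⟩
  simpa using (norm_nonneg _).trans (hC 0)

lemma mono (hF : ExpTypeLE F δ) (h : δ ≤ δ') : ExpTypeLE F δ' := by
  intro ε hε
  obtain ⟨C, hC0, hC⟩ := hF.exists_nonneg_bound ε hε
  exact ⟨C, fun z => (hC z).trans (by gcongr)⟩

lemma add (hF : ExpTypeLE F δ) (hG : ExpTypeLE G δ) : ExpTypeLE (fun z => F z + G z) δ := by
  intro ε hε
  obtain ⟨C, hC⟩ := hF ε hε
  obtain ⟨D, hD⟩ := hG ε hε
  exact ⟨C + D, fun z => (norm_add_le _ _).trans (by linarith [hC z, hD z])⟩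

lemma mul (hF : ExpTypeLE F δ) (hG : ExpTypeLE G δ') :
    ExpTypeLE (fun z => F z * G z) (δ + δ') := by
  intro ε hε
  obtain ⟨C, hC0, hC⟩ := hF.exists_nonneg_bound (ε / 2) (half_pos hε)
  obtain ⟨D, -, hD⟩ := hG.exists_nonneg_bound (ε / 2) (half_pos hε)
  refine ⟨C * D, fun z => ?_⟩
  calc ‖F z * G z‖ = ‖F z‖ * ‖G z‖ := norm_mul _ _
    _ ≤ C * Real.exp ((δ + ε / 2) * ‖z‖) * (D * Real.exp ((δ' + ε / 2) * ‖z‖)) :=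
        mul_le_mul (hC z) (hD z) (norm_nonneg _) (by positivity)
    _ = C * D * Real.exp ((δ + δ' + ε) * ‖z‖) := by
        rw [mul_mul_mul_comm, ← Real.exp_add]; ring_nf

lemma const (c : ℂ) : ExpTypeLE (fun _ => c) 0 := by
  intro ε hε
  refine ⟨‖c‖, fun z => le_mul_of_one_le_right (norm_nonneg c) ?_⟩
  exact Real.one_le_exp (by positivity)

lemma id : ExpTypeLE (fun z => z) 0 := by
  intro ε hε
  refine ⟨ε⁻¹, fun z => ?_⟩
  rw [zero_add, inv_mul_eq_div, le_div_iff₀ hε]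
  linarith [Real.add_one_le_exp (ε * ‖z‖)]

lemma pow (hF : ExpTypeLE F 0) (n : ℕ) : ExpTypeLE (fun z => F z ^ n) 0 := by
  induction n with
  | zero => simpa using const 1
  | succ n ih => simpa only [pow_succ, add_zero] using ih.mul hF

end ExpTypeLE

theorem Polynomial.expTypeLE_aeval (p : ℝ[X]) : ExpTypeLE (fun z : ℂ => aeval z p) 0 := by
  induction p using Polynomial.induction_on' with
  | add p q hp hq => simpa only [map_add] using hp.add hq
  | monomial n a =>
    simpa only [aeval_monomial, Complex.coe_algebraMap, add_zero] using
      (ExpTypeLE.const (a : ℂ)).mul (ExpTypeLE.id.pow n)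

lemma lastSignChange_nonneg (f : ℝ → ℝ) : 0 ≤ lastSignChange f :=
  Real.sInf_nonneg fun _ hr => hr.1.le

lemma lastSignChange_le {f : ℝ → ℝ} {r : ℝ} (hr : 0 < r) (hf : ∀ x, r ≤ |x| → 0 ≤ f x) :
    lastSignChange f ≤ r :=
  csInf_le ⟨0, fun _ hs => hs.1.le⟩ ⟨hr, hf⟩

lemma Continuous.integrable_of_ae_abs_le {μ : Measure ℝ} [IsFiniteMeasure μ] {f : ℝ → ℝ}
    (hf : Continuous f) {R : ℝ} (hR : ∀ᵐ x ∂μ, |x| ≤ R) : Integrable f μ := by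
  have hμ : μ.restrict (Set.Icc (-R) R) = μ :=
    Measure.restrict_eq_self_of_ae_mem (hR.mono fun _ hx => abs_le.1 hx)
  rw [← hμ]
  exact hf.continuousOn.integrableOn_compact isCompact_Icc

lemma integral_le_mul_measureReal_add {α : Type*} [MeasurableSpace α] {μ : Measure α}
    [IsFiniteMeasure μ] {f : α → ℝ} (hf : Integrable f μ) {s : Set α} (hs : MeasurableSet s)
    {a b : ℝ} (hfs : ∀ x ∈ s, f x ≤ a) (hfb : ∀ᵐ x ∂μ, f x ≤ b) (hb : 0 ≤ b) :
    ∫ x, f x ∂μ ≤ a * μ.real s + b * μ.real Set.univ := by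
  have hs' : ∫ x in s, f x ∂μ ≤ a * μ.real s := by
    simpa [mul_comm] using
      setIntegral_mono_on hf.integrableOn (integrableOn_const (measure_ne_top μ s)) hs hfs
  have hsc : ∫ x in sᶜ, f x ∂μ ≤ b * μ.real sᶜ := by
    simpa [mul_comm] using
      setIntegral_mono_ae hf.integrableOn (integrableOn_const (measure_ne_top μ sᶜ)) hfb
  have hsub : b * μ.real sᶜ ≤ b * μ.real Set.univ :=
    mul_le_mul_of_nonneg_left (measureReal_mono (Set.subset_univ _)) hb
  rw [← integral_add_compl hs hf]
  linarith

lemma eventually_mul_pow_le_mul_pow {b A : ℝ} (hb : 0 ≤ b) (hbA : b < A) (C : ℝ) {D : ℝ}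
    (hD : 0 < D) : ∀ᶠ n in atTop, C * b ^ n ≤ D * A ^ n := by
  have hA : 0 < A := hb.trans_lt hbA
  have hlim : Tendsto (fun n : ℕ => C * (b / A) ^ n) atTop (nhds 0) := by
    simpa using (tendsto_pow_atTop_nhds_zero_of_lt_one (div_nonneg hb hA.le)
      ((div_lt_one hA).2 hbA)).const_mul C
  filter_upwards [hlim.eventually (ge_mem_nhds hD)] with n hn
  rwa [div_pow, ← mul_div_assoc, div_le_iff₀ (pow_pos hA n)] at hn

noncomputable def signWitness (a R : ℝ) (n : ℕ) : ℝ[X] :=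
  (X ^ 2 - C (a ^ 2)) * (C (R ^ 2 + a ^ 2) - X ^ 2) ^ (2 * n)

section signWitness

variable {a R x : ℝ} {n : ℕ}

@[simp]
lemma eval_signWitness :
    (signWitness a R n).eval x = (x ^ 2 - a ^ 2) * (R ^ 2 + a ^ 2 - x ^ 2) ^ (2 * n) := by
  simp [signWitness]

lemma signWitness_eval_zero_neg (ha : a ≠ 0) : (signWitness a R n).eval 0 < 0 := by
  rw [eval_signWitness, zero_pow two_ne_zero, zero_sub, sub_zero]
  exact mul_neg_of_neg_of_pos (neg_neg_of_pos (by positivity)) (by positivity)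

lemma signWitness_eval_nonneg (ha : 0 ≤ a) (hx : a ≤ |x|) :
    0 ≤ (signWitness a R n).eval x := by
  rw [eval_signWitness]
  refine mul_nonneg ?_ ((even_two_mul n).pow_nonneg _)
  nlinarith [sq_abs x, pow_le_pow_left₀ ha hx 2]

lemma signWitness_eval_le_of_abs_le (hx : |x| ≤ R) :
    (signWitness a R n).eval x ≤ R ^ 2 * (R ^ 2) ^ (2 * n) := by
  have hxR : x ^ 2 ≤ R ^ 2 := sq_le_sq' (abs_le.1 hx).1 (abs_le.1 hx).2
  rw [eval_signWitness]
  rcases lt_or_ge (x ^ 2) (a ^ 2) with hxa | hxa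
  · exact (mul_nonpos_of_nonpos_of_nonneg (by linarith) (pow_nonneg (by nlinarith) _)).trans
      (by positivity)
  · exact mul_le_mul (by nlinarith) (pow_le_pow_left₀ (by nlinarith) (by linarith) _)
      (pow_nonneg (by nlinarith) _) (sq_nonneg R)

lemma signWitness_eval_le_of_abs_le_half (hx : |x| ≤ a / 2) :
    (signWitness a R n).eval x ≤ -(3 * a ^ 2 / 4) * (R ^ 2 + 3 * a ^ 2 / 4) ^ (2 * n) := by
  have hxa : x ^ 2 ≤ a ^ 2 / 4 := by nlinarith [sq_abs x, abs_nonneg x]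
  have hw : (R ^ 2 + 3 * a ^ 2 / 4) ^ (2 * n) ≤ (R ^ 2 + a ^ 2 - x ^ 2) ^ (2 * n) :=
    pow_le_pow_left₀ (by positivity) (by linarith) _
  rw [eval_signWitness]
  calc (x ^ 2 - a ^ 2) * (R ^ 2 + a ^ 2 - x ^ 2) ^ (2 * n)
      ≤ (x ^ 2 - a ^ 2) * (R ^ 2 + 3 * a ^ 2 / 4) ^ (2 * n) :=
        mul_le_mul_of_nonpos_left hw (by nlinarith)
    _ ≤ -(3 * a ^ 2 / 4) * (R ^ 2 + 3 * a ^ 2 / 4) ^ (2 * n) :=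
        mul_le_mul_of_nonneg_right (by linarith) (by positivity)

lemma exists_integral_signWitness_nonpos {μ : Measure ℝ} [IsFiniteMeasure μ]
    (hR : ∀ᵐ x ∂μ, |x| ≤ R) (ha : 0 < a) (hμ : 0 < μ (Set.Icc (-(a / 2)) (a / 2))) :
    ∃ n, ∫ x, (signWitness a R n).eval x ∂μ ≤ 0 := by
  set I := Set.Icc (-(a / 2)) (a / 2)
  have hI : 0 < μ.real I := ENNReal.toReal_pos hμ.ne' (measure_ne_top _ _)
  have hbound : ∀ n, ∫ x, (signWitness a R n).eval x ∂μ ≤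
      -(3 * a ^ 2 / 4) * (R ^ 2 + 3 * a ^ 2 / 4) ^ (2 * n) * μ.real I +
        R ^ 2 * (R ^ 2) ^ (2 * n) * μ.real Set.univ := fun n =>
    integral_le_mul_measureReal_add ((signWitness a R n).continuous.integrable_of_ae_abs_le hR)
      measurableSet_Icc (fun _ hx => signWitness_eval_le_of_abs_le_half (abs_le.2 hx))
      (hR.mono fun _ hx => signWitness_eval_le_of_abs_le hx) (by positivity)
  obtain ⟨N, hN⟩ := eventually_atTop.1 <| eventually_mul_pow_le_mul_pow (sq_nonneg R)
    (by linarith [pow_pos ha 2] : R ^ 2 < R ^ 2 + 3 * a ^ 2 / 4)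
    (R ^ 2 * μ.real Set.univ) (by positivity : 0 < 3 * a ^ 2 / 4 * μ.real I)
  exact ⟨N, (hbound N).trans (by nlinarith [hN (2 * N) (by omega)])⟩

end signWitness

/-- if `μ` is a finite nonnegative Borel measure with compactly contained
support charging every interval `[−r, r]`, then for every `δ ≥ 0` the sign uncertainty
constant `𝔼(μ; δ)` vanishes. -/
theorem sign_uncertainty_constant_vanishes (μ : Measure ℝ) [IsFiniteMeasure μ]
    (hsupp : ∃ R : ℝ, μ {x : ℝ | R < |x|} = 0)
    (hmass : ∀ r > (0 : ℝ), 0 < μ (Set.Icc (-r) r))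
    (δ : ℝ) (hδ : 0 ≤ δ) :
    sInf {s : ℝ | ∃ F : ℂ → ℂ, Differentiable ℂ F ∧ F ≠ 0 ∧ ExpTypeLE F δ ∧
      (∀ x : ℝ, (F x).im = 0) ∧
      Integrable (fun x : ℝ => (F x).re) μ ∧
      (∫ x, (F x).re ∂μ) ≤ 0 ∧
      (∃ R : ℝ, ∀ x : ℝ, R ≤ |x| → 0 ≤ (F x).re) ∧
      s = lastSignChange (fun x : ℝ => (F x).re)} = 0 := by
  obtain ⟨R, hR⟩ := hsupp
  have hRae : ∀ᵐ x ∂μ, |x| ≤ R := ae_iff.2 (by simpa using hR)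
  set S := {s : ℝ | ∃ F : ℂ → ℂ, Differentiable ℂ F ∧ F ≠ 0 ∧ ExpTypeLE F δ ∧
      (∀ x : ℝ, (F x).im = 0) ∧
      Integrable (fun x : ℝ => (F x).re) μ ∧
      (∫ x, (F x).re ∂μ) ≤ 0 ∧
      (∃ R : ℝ, ∀ x : ℝ, R ≤ |x| → 0 ≤ (F x).re) ∧
      s = lastSignChange (fun x : ℝ => (F x).re)}
  have hS : ∀ s ∈ S, 0 ≤ s := by
    rintro _ ⟨F, -, -, -, -, -, -, -, rfl⟩
    exact lastSignChange_nonneg _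
  refine le_antisymm (le_of_forall_pos_le_add fun ε hε => ?_) (Real.sInf_nonneg hS)
  obtain ⟨n, hn⟩ := exists_integral_signWitness_nonpos hRae hε (hmass _ (half_pos hε))
  set p := signWitness ε R n
  have hF : ∀ x : ℝ, aeval (x : ℂ) p = ((p.eval x : ℝ) : ℂ) := fun x => (ofReal_eval p x).symm
  have hmem : lastSignChange (fun x => p.eval x) ∈ S := by
    refine ⟨fun z => aeval z p, p.differentiable_aeval, fun h => ?_, p.expTypeLE_aeval.mono hδ,
      fun x => by simp [hF], ?_, ?_, ⟨ε, fun x hx => ?_⟩, ?_⟩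
    · exact (signWitness_eval_zero_neg hε.ne').ne <|
      by simpa only [hF, Pi.zero_apply, Complex.ofReal_eq_zero] using congrFun h ((0 : ℝ) : ℂ)
    all_goals simp only [hF, Complex.ofReal_re]
    · exact p.continuous.integrable_of_ae_abs_le hRae
    · exact hn
    · exact signWitness_eval_nonneg hε.le hx
  calc sInf S ≤ lastSignChange (fun x => p.eval x) := csInf_le ⟨0, hS⟩ hmem
    _ ≤ ε := lastSignChange_le hε fun x => signWitness_eval_nonneg hε.le
    _ = 0 + ε := (zero_add ε).symm
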